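/- Let δ₀ = 1/d, δ₁ = 1/(d−1) + (d−1), and for s ≥ 2, δ_s = (1/(d−1))(2 + ((d−2)²/(d−1))(1 + h_{s+2}))δ_{s−1} − (1/(d−1)²)δ_{s−2}, where h_s = 1/((d−1)^s − 1). Define for t ≥ 3: c_{d,t} = (1/(d−1))(1 + 1/((d−2)(1+h_t)))δ_{t−2} − (1/(d−1)²)δ_{t−3}. Then for all d ≥ 3 and t ≥ 3, c_{d,t} ≥ 1. -/

import Mathlib

/-- `h_s = 1/((d-1)^s - 1)`. -/
noncomputable def hseq (d : ℝ) (s : ℕ) : ℝ := ((d - 1) ^ s - 1)⁻¹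

/-- The sequence `δ_s` from Proposition 3. -/
noncomputable def deltaSeq (d : ℝ) : ℕ → ℝ
  | 0 => 1 / d
  | 1 => 1 / (d - 1) + (d - 1)
  | s + 2 =>
      (1 / (d - 1)) * (2 + (d - 2) ^ 2 / (d - 1) * (1 + hseq d (s + 4))) *
          deltaSeq d (s + 1) -
        (1 / (d - 1) ^ 2) * deltaSeq d s

/-- The quantity `c_{d,t}` from Proposition 3. -/
noncomputable def cdt (d : ℝ) (t : ℕ) : ℝ :=
  (1 / (d - 1)) * (1 + 1 / ((d - 2) * (1 + hseq d t))) * deltaSeq d (t - 2) -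
    (1 / (d - 1) ^ 2) * deltaSeq d (t - 3)

/-!
With `q = d - 1`, the recursion reads
`δ_{s+2} - δ_{s+1} = ((δ_{s+1} - δ_s) + (d - 2)² h_{s+4} δ_{s+1}) / q²`, and `h ≥ 0`,
so `δ` is positive and nondecreasing. As `h_t ≤ h_3` and `δ_{t-3} ≤ δ_{t-2}`, this gives
`c_{d,t} ≥ A δ_{t-2} ≥ A δ_1`, where `A = (q³ + q + 1) / q⁴` because
`(d - 2)(1 + h_3) = q³ / (q² + q + 1)`. Finally `A δ_1 = A (q + 1/q) ≥ q⁵ / q⁵ = 1`.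
-/

section
variable {d : ℝ}

lemma hseq_nonneg (hd : 2 ≤ d) (s : ℕ) : 0 ≤ hseq d s :=
  inv_nonneg.mpr (sub_nonneg.mpr (one_le_pow₀ (by linarith)))

lemma hseq_pos (hd : 2 < d) {s : ℕ} (hs : 1 ≤ s) : 0 < hseq d s :=
  inv_pos.mpr (sub_pos.mpr (one_lt_pow₀ (by linarith) (by omega)))

lemma hseq_le_hseq (hd : 2 < d) {s t : ℕ} (hs : 1 ≤ s) (hst : s ≤ t) : hseq d t ≤ hseq d s :=
  inv_anti₀ (sub_pos.mpr (one_lt_pow₀ (by linarith) (by omega)))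
    (sub_le_sub_right (pow_le_pow_right₀ (by linarith) hst) 1)

lemma deltaSeq_succ_succ_sub (hd : d ≠ 1) (s : ℕ) :
    deltaSeq d (s + 2) - deltaSeq d (s + 1) =
      (deltaSeq d (s + 1) - deltaSeq d s + (d - 2) ^ 2 * hseq d (s + 4) * deltaSeq d (s + 1)) /
        (d - 1) ^ 2 := by
  have : d - 1 ≠ 0 := sub_ne_zero.mpr hd
  rw [deltaSeq]
  field_simp
  ring

lemma deltaSeq_pos_and_le_succ (hd : 2 ≤ d) (s : ℕ) :
    0 < deltaSeq d s ∧ deltaSeq d s ≤ deltaSeq d (s + 1) := by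
  induction s with
  | zero =>
    have hd1 : 0 < d - 1 := by linarith
    simp only [deltaSeq]
    refine ⟨by positivity, ?_⟩
    have : 1 / d ≤ 1 / (d - 1) := one_div_le_one_div_of_le hd1 (by linarith)
    linarith
  | succ s ih =>
    obtain ⟨hpos, hle⟩ := ih
    have hpos' : 0 < deltaSeq d (s + 1) := hpos.trans_le hle
    refine ⟨hpos', sub_nonneg.mp ?_⟩
    rw [deltaSeq_succ_succ_sub (by linarith)]
    have := hseq_nonneg hd (s + 4)
    have := sub_nonneg.mpr hle
    positivity

lemma deltaSeq_pos (hd : 2 ≤ d) (s : ℕ) : 0 < deltaSeq d s :=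
  (deltaSeq_pos_and_le_succ hd s).1

lemma deltaSeq_monotone (hd : 2 ≤ d) : Monotone (deltaSeq d) :=
  monotone_nat_of_le_succ fun s => (deltaSeq_pos_and_le_succ hd s).2

lemma cdt_coeff_hseq_three (hd : 2 < d) :
    1 / (d - 1) * (1 + 1 / ((d - 2) * (1 + hseq d 3))) - 1 / (d - 1) ^ 2 =
      ((d - 1) ^ 3 + (d - 1) + 1) / (d - 1) ^ 4 := by
  have h1 : d - 1 ≠ 0 := by linarith
  have h2 : d - 2 ≠ 0 := by linarith
  have h3 : (d - 1) ^ 3 - 1 ≠ 0 := (sub_pos.mpr (one_lt_pow₀ (by linarith) (by norm_num))).ne'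
  rw [hseq]
  field_simp
  ring

lemma one_le_mul_deltaSeq_one (hd : 1 < d) :
    1 ≤ ((d - 1) ^ 3 + (d - 1) + 1) / (d - 1) ^ 4 * deltaSeq d 1 := by
  have hq : 0 < d - 1 := by linarith
  rw [deltaSeq, ← sub_nonneg]
  have : ((d - 1) ^ 3 + (d - 1) + 1) / (d - 1) ^ 4 * (1 / (d - 1) + (d - 1)) - 1 =
      (2 * (d - 1) ^ 3 + (d - 1) ^ 2 + (d - 1) + 1) / (d - 1) ^ 5 := by
    field_simp
    ring
  rw [this]
  positivity

theorem one_le_cdt (hd : 2 < d) {t : ℕ} (ht : 3 ≤ t) : 1 ≤ cdt d t := by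
  obtain ⟨k, rfl⟩ : ∃ k, t = k + 3 := ⟨t - 3, by omega⟩
  have hq : 0 < d - 1 := by linarith
  have hδ := deltaSeq_pos hd.le (k + 1)
  have hh := hseq_pos hd (s := k + 3) (by omega)
  calc 1 ≤ ((d - 1) ^ 3 + (d - 1) + 1) / (d - 1) ^ 4 * deltaSeq d 1 :=
        one_le_mul_deltaSeq_one (by linarith)
    _ ≤ ((d - 1) ^ 3 + (d - 1) + 1) / (d - 1) ^ 4 * deltaSeq d (k + 1) := by
        gcongr
        exact deltaSeq_monotone hd.le (by omega)
    _ = 1 / (d - 1) * (1 + 1 / ((d - 2) * (1 + hseq d 3))) * deltaSeq d (k + 1) -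
          1 / (d - 1) ^ 2 * deltaSeq d (k + 1) := by
        rw [← cdt_coeff_hseq_three hd]
        ring
    _ ≤ cdt d (k + 3) := by
        rw [cdt, show k + 3 - 2 = k + 1 by omega, show k + 3 - 3 = k by omega]
        gcongr
        · exact hseq_le_hseq hd (by norm_num) (by omega)
        · exact deltaSeq_monotone hd.le (by omega)

end

/-- for all `d ≥ 3` and `t ≥ 3`, `c_{d,t} ≥ 1`. -/
theorem stmt16 (d : ℕ) (hd : 3 ≤ d) (t : ℕ) (ht : 3 ≤ t) : 1 ≤ cdt (d : ℝ) t :=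
  one_le_cdt (by exact_mod_cast hd) ht
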